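/- arXiv:2102.12685 — 3 statements merged into one kernel-verified Lean document; each statement's English description precedes it below -/
import Mathlib

section
/- In a chordal graph, a path is chordless if and only if it is triangle-free (i.e., no three consecutive vertices on the path pairwise adjacent). -/
variable {V : Type*}

/-- A list of vertices is a path in `G`: all vertices distinct and consecutive
vertices adjacent. -/
def IsListPath (G : SimpleGraph V) (p : List V) : Prop :=
  p.Nodup ∧ p.Chain' G.Adj

/-- A chord of a path: an edge of `G` joining two nonconsecutive vertices on the path. -/
def PathHasChord (G : SimpleGraph V) (p : List V) : Prop :=
  ∃ (i j : ℕ) (hi : i < p.length) (hj : j < p.length),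
    i + 1 < j ∧ G.Adj (p.get ⟨i, hi⟩) (p.get ⟨j, hj⟩)

/-- A path is triangle-free if no three consecutive vertices on it are pairwise
adjacent, i.e. `v i` is never adjacent to `v (i+2)`. -/
def PathTriangleFree (G : SimpleGraph V) (p : List V) : Prop :=
  ∀ (i : ℕ) (h : i + 2 < p.length),
    ¬ G.Adj (p.get ⟨i, by omega⟩) (p.get ⟨i + 2, h⟩)

/-- A list of (at least three) distinct vertices forming a cycle of `G`:
consecutive vertices adjacent and the last vertex adjacent to the first.
Its length (number of edges) is `p.length`. -/
def IsListCycle (G : SimpleGraph V) (p : List V) : Prop :=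
  3 ≤ p.length ∧ p.Nodup ∧ p.Chain' G.Adj ∧
    ∃ h : p ≠ [], G.Adj (p.getLast h) (p.head h)

/-- A chord of a cycle: an edge joining two cyclically nonconsecutive vertices. -/
def CycleHasChord (G : SimpleGraph V) (p : List V) : Prop :=
  ∃ (i j : ℕ) (hi : i < p.length) (hj : j < p.length),
    i + 1 < j ∧ ¬ (i = 0 ∧ j = p.length - 1) ∧
      G.Adj (p.get ⟨i, hi⟩) (p.get ⟨j, hj⟩)

/-- A chordal graph: every cycle of length greater than three has a chord. -/
def IsChordal (G : SimpleGraph V) : Prop :=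
  ∀ p : List V, IsListCycle G p → 3 < p.length → CycleHasChord G p

/-- `E` is an orientation of the edges of `G`: every edge gets exactly one
direction, and directed edges only occur where `G` has edges. -/
def IsOrientation (G : SimpleGraph V) (E : V → V → Prop) : Prop :=
  (∀ a b, E a b → G.Adj a b) ∧
  (∀ a b, G.Adj a b → (E a b ∨ E b a)) ∧
  (∀ a b, ¬ (E a b ∧ E b a))

/-- An acyclic directed relation: no directed cycles. -/
def OrientAcyclic (E : V → V → Prop) : Prop := ∀ a, ¬ Relation.TransGen E a a

/-- A v-structure-free orientation: no vertex has two non-adjacent parents. -/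
def VSFree (G : SimpleGraph V) (E : V → V → Prop) : Prop :=
  ∀ a b c, E a b → E c b → a ≠ c → G.Adj a c

/-- A source: a vertex with no incoming directed edge. -/
def IsSource (E : V → V → Prop) (v : V) : Prop := ∀ a, ¬ E a v

lemma getElem_idx_congr {l : List V} {i j : ℕ} (h : i = j) (hi : i < l.length) :
    l[i] = l[j]'(h ▸ hi) := by subst h; rfl

/-- In a chordal graph, a path is chordless iff it is triangle-free. -/
theorem stmt0 (G : SimpleGraph V) (hG : IsChordal G) (p : List V)
    (hp : IsListPath G p) :
    ¬ PathHasChord G p ↔ PathTriangleFree G p := by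
  obtain ⟨hnd, hch⟩ := hp
  have key : ∀ d i j, ∀ (hi : i < p.length) (hj : j < p.length), j - i = d → i + 1 < j →
      PathTriangleFree G p → ¬ G.Adj p[i] p[j] := by
    intro d
    induction d using Nat.strong_induction_on with
    | _ d ih =>
      intro i j hi hj hd hij htf hadj
      rcases Nat.lt_or_ge d 3 with hd3 | hd3
      · have hj2 : j = i + 2 := by omega
        subst hj2
        exact htf i hj (by simpa using hadj)
      · have hji : j = i + d := by omega
        set q : List V := (p.drop i).take (d + 1) with hq
        have hqlen : q.length = d + 1 := by
          simp [hq]; omega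
        have hqget : ∀ k (hk : k < q.length), q[k] = p[i + k]'(by rw [hqlen] at hk; omega) := by
          intro k hk
          simp [hq, List.getElem_take, List.getElem_drop]
        have hqinf : q <:+: p :=
          ((List.take_prefix _ _).isInfix).trans ((List.drop_suffix _ _).isInfix)
        have hqne : q ≠ [] := by
          intro h0; rw [h0] at hqlen; simp at hqlen
        have hqcyc : IsListCycle G q := by
          refine ⟨by omega, hnd.sublist hqinf.sublist, hch.infix hqinf, hqne, ?_⟩
          rw [List.getLast_eq_getElem, List.head_eq_getElem]
          rw [hqget 0 (by omega), hqget (q.length - 1) (by omega)]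
          have h1 : i + (q.length - 1) = j := by omega
          have h2 : i + 0 = i := rfl
          rw [getElem_idx_congr h1, getElem_idx_congr h2]
          exact hadj.symm
        obtain ⟨a, b, ha, hb, hab, hne, hadj2⟩ := hG q hqcyc (by omega)
        rw [hqlen] at ha hb
        have hlt : b - a < d := by rw [hqlen] at hne; omega
        simp only [List.get_eq_getElem] at hadj2
        rw [hqget a (by omega), hqget b (by omega)] at hadj2
        exact ih (b - a) hlt (i + a) (i + b) (by omega) (by omega) (by omega) (by omega)
          htf hadj2
  constructor
  · intro hnc i h hadj
    exact hnc ⟨i, i + 2, by omega, h, by omega, hadj⟩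
  · rintro htf ⟨i, j, hi, hj, hij, hadj⟩
    simp only [List.get_eq_getElem] at hadj
    exact key (j - i) i j hi hj rfl hij htf hadj
end

section
/- Let ρ be a cycle of length greater than 3 in a chordal graph and X a vertex on ρ. If the two vertices adjacent to X on ρ are not adjacent to each other in the graph, then ρ has a chord with X as an endpoint. -/
variable {V : Type*}

/-!
Rotate the cycle so that it reads `a :: X :: b :: r` with `a`, `b` the neighbours of `X`, and
induct on its length. Since `a` and `b` are not adjacent, the cycle is longer than a triangle, so
chordality provides a chord. Either the chord starts at `X`, and we are done, or it shortcuts the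
cycle to a strictly shorter cycle `a :: X :: b :: r'` with `r'` a sublist of `r`, to which the
induction hypothesis applies.
-/

theorem List.exists_rotate_eq_cons_cons_cons {α : Type*} (p : List α) {i : ℕ}
    (hi : i < p.length) (h3 : 3 ≤ p.length) :
    ∃ r, p.rotate ((i + p.length - 1) % p.length) =
      p[(i + p.length - 1) % p.length]'(Nat.mod_lt _ (Nat.zero_lt_of_lt hi)) :: p[i] ::
        p[(i + 1) % p.length]'(Nat.mod_lt _ (Nat.zero_lt_of_lt hi)) :: r := by
  have hmod : ∀ t, (t + (i + p.length - 1) % p.length) % p.length =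
      (i + p.length + t - 1) % p.length := fun t => by
    rw [Nat.add_comm, Nat.mod_add_mod, show i + p.length - 1 + t = i + p.length + t - 1 by omega]
  refine ⟨(p.rotate ((i + p.length - 1) % p.length)).drop 3,
    List.ext_getElem (by simp; omega) fun t _ _ => ?_⟩
  rcases t with _ | _ | _ | t
  · simp only [List.getElem_rotate, List.getElem_cons_zero]; congr 1; rw [hmod]; simp
  · simp only [List.getElem_rotate, List.getElem_cons_succ, List.getElem_cons_zero]; congr 1
    rw [hmod, Nat.add_sub_cancel, Nat.add_mod_right, Nat.mod_eq_of_lt hi]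
  · simp only [List.getElem_rotate, List.getElem_cons_succ, List.getElem_cons_zero]; congr 1
    rw [hmod, show i + p.length + (1 + 1) - 1 = i + 1 + p.length by omega, Nat.add_mod_right]
  · simp only [List.getElem_cons_succ, List.getElem_drop]; congr 1; omega

section

variable {G : SimpleGraph V} {p : List V}

theorem isListCycle_iff_forall_adj_getElem_succ_mod :
    IsListCycle G p ↔ 3 ≤ p.length ∧ p.Nodup ∧
      ∀ t (ht : t < p.length),
        G.Adj p[t] (p[(t + 1) % p.length]'(Nat.mod_lt _ (Nat.zero_lt_of_lt ht))) := by
  refine ⟨fun ⟨h3, hnd, hc, hne, hw⟩ => ⟨h3, hnd, fun t ht => ?_⟩,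
    fun ⟨h3, hnd, h⟩ => ⟨h3, hnd, ?_, List.ne_nil_of_length_pos (by omega), ?_⟩⟩
  · rcases Nat.lt_or_ge (t + 1) p.length with h | h
    · simpa only [Nat.mod_eq_of_lt h] using List.isChain_iff_getElem.1 hc t h
    · rw [List.getLast_eq_getElem, List.head_eq_getElem_zero] at hw
      convert hw using 2
      · omega
      · rw [show t + 1 = p.length by omega, Nat.mod_self]
  · refine List.isChain_iff_getElem.2 fun t ht => ?_
    simpa only [Nat.mod_eq_of_lt ht] using h t (by omega)
  · rw [List.getLast_eq_getElem, List.head_eq_getElem_zero]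
    simpa only [Nat.sub_add_cancel (show 1 ≤ p.length by omega), Nat.mod_self]
      using h (p.length - 1) (by omega)

theorem IsListCycle.rotate (hp : IsListCycle G p) (m : ℕ) : IsListCycle G (p.rotate m) := by
  rw [isListCycle_iff_forall_adj_getElem_succ_mod] at hp ⊢
  obtain ⟨h3, hnd, h⟩ := hp
  refine ⟨by simpa using h3, List.nodup_rotate.2 hnd, fun t ht => ?_⟩
  simp only [List.getElem_rotate, List.length_rotate] at ht ⊢
  convert h ((t + m) % p.length) (Nat.mod_lt _ (by omega)) using 2
  rw [Nat.mod_add_mod, Nat.mod_add_mod, Nat.add_right_comm]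

theorem IsListCycle.take_succ (hp : IsListCycle G p) {k : ℕ} (h2 : 2 ≤ k) (hk : k < p.length)
    (hadj : G.Adj (p[0]'(Nat.zero_lt_of_lt hk)) p[k]) : IsListCycle G (p.take (k + 1)) := by
  obtain ⟨-, hnd, hc, -⟩ := hp
  have hlen : (p.take (k + 1)).length = k + 1 := by simp; omega
  refine ⟨by omega, (List.take_sublist _ _).nodup hnd, hc.take _,
    List.ne_nil_of_length_pos (by omega), ?_⟩
  rw [List.getLast_eq_getElem, List.head_eq_getElem_zero]
  simpa [hlen] using hadj.symm

theorem IsListCycle.take_append_drop (hp : IsListCycle G p) {j k : ℕ} (hjk : j < k)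
    (hk : k < p.length) (hlen : 2 ≤ j + (p.length - k))
    (hadj : G.Adj (p[j]'(hjk.trans hk)) p[k]) :
    IsListCycle G (p.take (j + 1) ++ p.drop k) := by
  obtain ⟨-, hnd, hc, hne, hw⟩ := hp
  have hsub : (p.take (j + 1) ++ p.drop k).Sublist p := by
    simpa using ((List.drop_sublist_drop_left p (show j + 1 ≤ k by omega)).append_left
      (p.take (j + 1)))
  have htake : p.take (j + 1) ≠ [] := by simp; omega
  have hdrop : p.drop k ≠ [] := by simp; omega
  refine ⟨by simp; omega, hsub.nodup hnd, ?_, by simp [hdrop], ?_⟩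
  · refine List.isChain_append.2 ⟨hc.take _, hc.drop _, fun x hx y hy => ?_⟩
    rw [List.getLast?_take, if_neg (by omega), Nat.add_sub_cancel,
      List.getElem?_eq_getElem (by omega), Option.some_or, Option.mem_some_iff] at hx
    rw [List.head?_drop, List.getElem?_eq_getElem hk, Option.mem_some_iff] at hy
    exact hx ▸ hy ▸ hadj
  · rw [List.getLast_append_of_ne_nil _ hdrop, List.getLast_drop,
      List.head_append_of_ne_nil htake, List.head_take]
    exact hw

theorem IsChordal.exists_mem_adj_of_not_adj (hG : IsChordal G) {a x b : V} {r : List V}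
    (hp : IsListCycle G (a :: x :: b :: r)) (hab : ¬ G.Adj a b) : ∃ w ∈ r, G.Adj x w := by
  have hr : r ≠ [] := by
    rintro rfl
    exact hab hp.2.2.2.2.symm
  obtain ⟨j, k, hj, hk, hjk, hnot, hadj⟩ := hG _ hp (by simpa [List.length_pos_iff])
  simp only [List.length_cons] at hk hnot
  have hk2 : ¬ (j = 0 ∧ k = 2) := by
    rintro ⟨rfl, rfl⟩
    exact hab hadj
  obtain ⟨k, rfl⟩ : ∃ k', k = k' + 3 := ⟨k - 3, by omega⟩
  rcases j with _ | _ | j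
  · have hq : IsListCycle G (a :: x :: b :: r.take (k + 1)) :=
      hp.take_succ (k := k + 3) (by omega) hk hadj
    have : (r.take (k + 1)).length < r.length := by simp; omega
    obtain ⟨w, hw, hxw⟩ := hG.exists_mem_adj_of_not_adj hq hab
    exact ⟨w, List.mem_of_mem_take hw, hxw⟩
  · exact ⟨r[k], List.getElem_mem _, hadj⟩
  · have hq : IsListCycle G (a :: x :: b :: (r.take j ++ r.drop k)) :=
      hp.take_append_drop (j := j + 2) (k := k + 3) (by omega) hk (by simp; omega) hadj
    have : (r.take j ++ r.drop k).length < r.length := by simp; omega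
    obtain ⟨w, hw, hxw⟩ := hG.exists_mem_adj_of_not_adj hq hab
    rcases List.mem_append.1 hw with hw | hw
    · exact ⟨w, List.mem_of_mem_take hw, hxw⟩
    · exact ⟨w, List.mem_of_mem_drop hw, hxw⟩
termination_by r.length

end

/-- If the two vertices adjacent to a vertex `X = p[i]` on a cycle of length `> 3`
in a chordal graph are non-adjacent, then the cycle has a chord with `X` as an
endpoint (an edge from `X` to a vertex of the cycle other than `X` and its two
cyclic neighbours). -/
theorem stmt1 (G : SimpleGraph V) (hG : IsChordal G) (p : List V)
    (hp : IsListCycle G p) (i : ℕ) (hi : i < p.length)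
    (hnadj : ¬ G.Adj (p.get ⟨(i + p.length - 1) % p.length, Nat.mod_lt _ (by omega)⟩)
      (p.get ⟨(i + 1) % p.length, Nat.mod_lt _ (by omega)⟩)) :
    ∃ w ∈ p, w ≠ p.get ⟨i, hi⟩ ∧
      w ≠ p.get ⟨(i + p.length - 1) % p.length, Nat.mod_lt _ (by omega)⟩ ∧
      w ≠ p.get ⟨(i + 1) % p.length, Nat.mod_lt _ (by omega)⟩ ∧
      G.Adj (p.get ⟨i, hi⟩) w := by
  obtain ⟨r, hr⟩ := p.exists_rotate_eq_cons_cons_cons hi hp.1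
  have hq := hp.rotate ((i + p.length - 1) % p.length)
  rw [hr] at hq
  obtain ⟨w, hw, hxw⟩ := hG.exists_mem_adj_of_not_adj hq hnadj
  have hwp : w ∈ p := List.mem_rotate.1 (by rw [hr]; simp [hw])
  have hnd := hq.2.1
  simp only [List.nodup_cons, List.mem_cons, not_or] at hnd
  obtain ⟨⟨-, -, ha⟩, ⟨-, hx⟩, hb, -⟩ := hnd
  exact ⟨w, hwp, ne_of_mem_of_not_mem hw hx, ne_of_mem_of_not_mem hw ha,
    ne_of_mem_of_not_mem hw hb, hxw⟩
end

section
/- Let C be a connected chordal graph, X a vertex of C, and π = (X, v_1, ..., v_n) a chordless path starting at X with length at least 2. In any v-structure-free acyclic orientation of C in which X is the unique source, π is oriented as a directed path away from X. -/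
/-!
On a chordless path `x = v₀, v₁, …` the vertices `vᵢ` and `vᵢ₊₂` are never adjacent, so once
an edge `vᵢ → vᵢ₊₁` is directed forward, the next edge cannot point back at `vᵢ₊₁` without
creating the v-structure `vᵢ → vᵢ₊₁ ← vᵢ₊₂`. The first edge points away from `x` because `x` is
a source, and the orientation propagates along the whole path.
-/

variable {V : Type*}

section

variable {G : SimpleGraph V}

theorem PathTriangleFree.of_not_pathHasChord {p : List V} (h : ¬ PathHasChord G p) :
    PathTriangleFree G p :=
  fun i hi hadj => h ⟨i, i + 2, by omega, hi, by omega, hadj⟩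

theorem PathTriangleFree.tail {a : V} {l : List V} (h : PathTriangleFree G (a :: l)) :
    PathTriangleFree G l :=
  fun i hi => by simpa using h (i + 1) (by simp only [List.length_cons]; omega)

theorem IsListPath.tail {a : V} {l : List V} (h : IsListPath G (a :: l)) : IsListPath G l :=
  ⟨h.1.of_cons, h.2.tail⟩

theorem IsListPath.isChain_of_pathTriangleFree {E : V → V → Prop} (hor : IsOrientation G E)
    (hvs : VSFree G E) {a b : V} {l : List V} (hp : IsListPath G (a :: b :: l))
    (htf : PathTriangleFree G (a :: b :: l)) (hab : E a b) : (a :: b :: l).IsChain E := by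
  induction l generalizing a b with
  | nil => exact List.IsChain.cons_cons hab (List.isChain_singleton b)
  | cons c l ih =>
    have hadj_bc : G.Adj b c := (List.isChain_cons_cons.1 (List.isChain_cons_cons.1 hp.2).2).1
    have hac : a ≠ c := fun h => (List.nodup_cons.1 hp.1).1 (by simp [h])
    have hbc : E b c := by
      refine (hor.2.1 b c hadj_bc).resolve_right fun hcb => ?_
      exact htf 0 (by simp) (hvs a b c hab hcb hac)
    exact List.IsChain.cons_cons hab (ih hp.tail htf.tail hbc)

end

theorem stmt16_general (G : SimpleGraph V)
    (E : V → V → Prop) (hor : IsOrientation G E)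
    (hvs : VSFree G E) (x : V) (hsrc : IsSource E x)
    (p : List V) (hp : IsListPath G p) (hchordless : ¬ PathHasChord G p)
    (hhead : p.head? = some x) :
    p.Chain' E := by
  match p, hhead with
  | [_], _ => exact List.isChain_singleton _
  | y :: b :: l, hhead =>
    obtain rfl : x = y := by simpa using hhead.symm
    have hxb : E x b :=
      (hor.2.1 x b (List.isChain_cons_cons.1 hp.2).1).resolve_right (hsrc b)
    exact hp.isChain_of_pathTriangleFree hor hvs (.of_not_pathHasChord hchordless) hxb

/-- In a connected chordal graph, any chordless path of length at least 2
starting at the unique source `x` of a v-structure-free acyclic orientation is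
oriented as a directed path away from `x`. -/
theorem stmt16 (G : SimpleGraph V) (hG : IsChordal G) (hconn : G.Connected)
    (E : V → V → Prop) (hor : IsOrientation G E) (hac : OrientAcyclic E)
    (hvs : VSFree G E) (x : V) (hsrc : IsSource E x)
    (huniq : ∀ s, IsSource E s → s = x)
    (p : List V) (hp : IsListPath G p) (hchordless : ¬ PathHasChord G p)
    (hhead : p.head? = some x) (hlen : 3 ≤ p.length) :
    p.Chain' E :=
  stmt16_general G E hor hvs x hsrc p hp hchordless hhead
end
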